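/- Let T be a positive bounded operator on a complex Hilbert space H. If the essential spectrum of T is a singleton {β} and the interval (β, ‖T‖] contains only finitely many eigenvalues of T, then the range of T is closed. -/

import Mathlib

open ContinuousLinearMap MeasureTheory

variable {E F : Type*} [NormedAddCommGroup E] [InnerProductSpace ℂ E] [CompleteSpace E]
  [NormedAddCommGroup F] [InnerProductSpace ℂ F] [CompleteSpace F]

/-- The point spectrum (set of eigenvalues). -/
def pointSpec (T : E →L[ℂ] E) : Set ℂ := {l | ∃ x : E, x ≠ 0 ∧ T x = l • x}

/-- The essential spectrum of a (self-adjoint) bounded operator: eigenvalues of infinite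
multiplicity, limit points of the point spectrum, and the continuous spectrum. -/
def essSpec (T : E →L[ℂ] E) : Set ℂ :=
  {l | (¬ FiniteDimensional ℂ (LinearMap.ker ((T - l • (1 : E →L[ℂ] E)) : E →ₗ[ℂ] E))) ∨
       l ∈ closure (pointSpec T \ {l}) ∨
       (l ∈ spectrum ℂ T ∧ Function.Injective ⇑(T - l • (1 : E →L[ℂ] E)) ∧
         Dense (Set.range ⇑(T - l • (1 : E →L[ℂ] E))))}

/-- The discrete spectrum: isolated eigenvalues of finite multiplicity. -/
def discSpec (T : E →L[ℂ] E) : Set ℂ :=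
  {l | l ∈ pointSpec T ∧ FiniteDimensional ℂ (LinearMap.ker ((T - l • (1 : E →L[ℂ] E)) : E →ₗ[ℂ] E)) ∧
       l ∉ closure (spectrum ℂ T \ {l})}

/-- The minimum modulus m(T) = inf {‖Tx‖ : ‖x‖ = 1}. -/
noncomputable def minMod (T : E →L[ℂ] F) : ℝ := sInf ((fun x => ‖T x‖) '' {x : E | ‖x‖ = 1})

/-- T attains its minimum modulus. -/
def MinAttain (T : E →L[ℂ] F) : Prop := ∃ x : E, ‖x‖ = 1 ∧ ‖T x‖ = minMod T

/-- T attains its norm. -/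
def NormAttain (T : E →L[ℂ] F) : Prop := ∃ x : E, ‖x‖ = 1 ∧ ‖T x‖ = ‖T‖

/-- T is absolutely minimum attaining (AM). -/
def AbsMinAttain (T : E →L[ℂ] F) : Prop :=
  ∀ M : Submodule ℂ E, IsClosed (M : Set E) → MinAttain (T.comp M.subtypeL)

/-- T is absolutely norm attaining (AN). -/
def AbsNormAttain (T : E →L[ℂ] F) : Prop :=
  ∀ M : Submodule ℂ E, IsClosed (M : Set E) → NormAttain (T.comp M.subtypeL)

/-- S is the Moore-Penrose (generalized) inverse of T. -/
def MoorePenrose (T S : E →L[ℂ] E) : Prop :=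
  T ∘L S ∘L T = T ∧ S ∘L T ∘L S = S ∧ IsSelfAdjoint (T ∘L S) ∧ IsSelfAdjoint (S ∘L T)

/-- T is paranormal: ‖Tx‖² ≤ ‖T²x‖‖x‖ for all x. -/
def Paranormal (T : E →L[ℂ] E) : Prop := ∀ x : E, ‖T x‖ ^ 2 ≤ ‖T (T x)‖ * ‖x‖

variable {H : Type*} [NormedAddCommGroup H] [InnerProductSpace ℂ H] [CompleteSpace H]

/-!
Every real spectral value of `T` other than `β` is an eigenvalue. If `0` were an accumulation
point of the spectrum, it would be a limit of nonzero eigenvalues and hence lie in the essential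
spectrum, forcing `β = 0`; but then those eigenvalues would all lie in the finite set of
eigenvalues in `(0, ‖T‖]`. So `0` is isolated in the spectrum, `x ↦ x⁻¹` is continuous on it, and
`S = cfc (·⁻¹) T` satisfies `T S T = T`. The range of `T` is then the closed set `{y | T (S y) = y}`.
-/

open Filter Topology Set

theorem isClosed_range_of_comp_comp_eq {X Y : Type*} [TopologicalSpace X] [TopologicalSpace Y]
    [T2Space Y] {f : X → Y} {g : Y → X} (hf : Continuous f) (hg : Continuous g)
    (h : f ∘ g ∘ f = f) : IsClosed (range f) := by
  have : range f = {y | f (g y) = y} := by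
    ext y
    refine ⟨?_, fun hy => ⟨g y, hy⟩⟩
    rintro ⟨x, rfl⟩
    exact congrFun h x
  rw [this]
  exact isClosed_eq (hf.comp hg) continuous_id

theorem continuousOn_inv_of_zero_notMem_closure {G₀ : Type*} [GroupWithZero G₀]
    [TopologicalSpace G₀] [ContinuousInv₀ G₀] {s : Set G₀} (hs : 0 ∉ closure (s \ {0})) :
    ContinuousOn Inv.inv s := by
  intro x _
  rcases eq_or_ne x 0 with rfl | hx
  · rw [← continuousWithinAt_sdiff_self, ContinuousWithinAt,
      notMem_closure_iff_nhdsWithin_eq_bot.mp hs]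
    exact tendsto_bot
  · exact (continuousAt_inv₀ hx).continuousWithinAt

theorem IsSelfAdjoint.mul_cfc_inv_mul_self {A : Type*} [Ring A] [StarRing A] [TopologicalSpace A]
    [Algebra ℝ A] [ContinuousFunctionalCalculus ℝ A IsSelfAdjoint] {a : A} (ha : IsSelfAdjoint a)
    (h0 : (0 : ℝ) ∉ closure (spectrum ℝ a \ {0})) :
    a * cfc (·⁻¹ : ℝ → ℝ) a * a = a := by
  have hinv := continuousOn_inv_of_zero_notMem_closure h0
  -- `x * x⁻¹ * x = x` holds for every real `x`, including `x = 0` thanks to `0⁻¹ = 0`.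
  conv_rhs => rw [← cfc_id' ℝ a, ← cfc_congr (fun x _ => mul_inv_mul_cancel x)]
  rw [cfc_mul _ _ a, cfc_mul _ _ a, cfc_id' ℝ a]

theorem IsSelfAdjoint.denseRange_of_injective {𝕜 V : Type*} [RCLike 𝕜] [NormedAddCommGroup V]
    [InnerProductSpace 𝕜 V] [CompleteSpace V] {A : V →L[𝕜] V} (hA : IsSelfAdjoint A)
    (hinj : Function.Injective A) : DenseRange A := by
  have : (LinearMap.range (A : V →ₗ[𝕜] V))ᗮ = ⊥ := by
    rw [hA.isSymmetric.orthogonal_range, LinearMap.ker_eq_bot]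
    exact hinj
  rw [← Submodule.topologicalClosure_eq_top_iff,
    ← Submodule.dense_iff_topologicalClosure_eq_top] at this
  exact this

theorem mem_pointSpec_of_mem_spectrum_of_notMem_essSpec {T : H →L[ℂ] H} (hT : IsSelfAdjoint T)
    {z : ℂ} (hz : z ∈ spectrum ℂ T) (hess : z ∉ essSpec T) : z ∈ pointSpec T := by
  have hA : IsSelfAdjoint (T - z • (1 : H →L[ℂ] H)) := by
    rw [hT.mem_spectrum_eq_re hz]
    exact hT.sub (by simp [IsSelfAdjoint, star_smul])
  have hinj : ¬ Function.Injective ⇑(T - z • (1 : H →L[ℂ] H)) := fun hinj =>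
    hess (Or.inr (Or.inr ⟨hz, hinj, hA.denseRange_of_injective hinj⟩))
  rw [injective_iff_map_eq_zero] at hinj
  push Not at hinj
  obtain ⟨x, hx, hx0⟩ := hinj
  exact ⟨x, hx0, sub_eq_zero.mp (by simpa using hx)⟩

theorem spectrum_diff_subset_pointSpec {T : H →L[ℂ] H} (hT : IsSelfAdjoint T) {β : ℝ}
    (hess : essSpec T ⊆ {(β : ℂ)}) : spectrum ℝ T \ {β} ⊆ {y : ℝ | (y : ℂ) ∈ pointSpec T} := by
  rintro y ⟨hy, hyβ⟩
  refine mem_pointSpec_of_mem_spectrum_of_notMem_essSpec hT (spectrum.algebraMap_mem ℂ hy) ?_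
  intro h
  exact hyβ (by exact_mod_cast Set.mem_singleton_iff.mp (hess h))

theorem ContinuousLinearMap.IsPositive.zero_notMem_closure_spectrum_diff {T : H →L[ℂ] H}
    (hT : T.IsPositive) {β : ℝ} (hess : essSpec T = {(β : ℂ)})
    (hfin : {r : ℝ | r ∈ Ioc β ‖T‖ ∧ (r : ℂ) ∈ pointSpec T}.Finite) :
    (0 : ℝ) ∉ closure (spectrum ℝ T \ {0}) := by
  intro h0
  rw [mem_closure_ne_iff_frequently_within] at h0
  have hneβ : ∀ᶠ y in 𝓝[≠] (0 : ℝ), y ≠ β :=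
    (eventually_cofinite_ne β).filter_mono (nhdsNE_le_cofinite 0)
  have heig : ∃ᶠ y in 𝓝[≠] (0 : ℝ), y ∈ spectrum ℝ T ∧ (y : ℂ) ∈ pointSpec T :=
    (h0.and_eventually hneβ).mono fun y hy =>
      ⟨hy.1, spectrum_diff_subset_pointSpec hT.isSelfAdjoint hess.subset hy⟩
  have hβ : β = 0 := by
    have h0eig : (0 : ℂ) ∈ closure (pointSpec T \ {0}) := by
      simpa using map_mem_closure (t := pointSpec T \ {0}) Complex.continuous_ofReal
        (mem_closure_ne_iff_frequently_within.mpr (heig.mono fun _ h => h.2))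
        (fun y hy => ⟨hy.1, by simpa using hy.2⟩)
    have h0ess : (0 : ℂ) ∈ essSpec T := Or.inr (Or.inl h0eig)
    rw [hess] at h0ess
    exact_mod_cast (Set.mem_singleton_iff.mp h0ess).symm
  subst hβ
  obtain ⟨y, ⟨⟨hy, hyeig⟩, hy0⟩, hyfin⟩ :=
    ((heig.and_eventually self_mem_nhdsWithin).and_eventually
      (hfin.eventually_cofinite_notMem.filter_mono (nhdsNE_le_cofinite 0))).exists
  have hy_nonneg : 0 ≤ y :=
    spectrum_nonneg_of_nonneg ((ContinuousLinearMap.nonneg_iff_isPositive T).mpr hT) hy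
  have hy_le : y ≤ ‖T‖ := by
    obtain ⟨x, hx, -⟩ := hyeig
    have : Nontrivial H := nontrivial_of_ne x 0 hx
    simpa [abs_of_nonneg hy_nonneg] using
      spectrum.norm_le_norm_of_mem (spectrum.algebraMap_mem ℂ hy)
  exact hyfin ⟨⟨lt_of_le_of_ne hy_nonneg (Ne.symm hy0), hy_le⟩, hyeig⟩

theorem stmt6 (T : H →L[ℂ] H) (hT : T.IsPositive) (β : ℝ)
    (hess : essSpec T = {(β : ℂ)})
    (hfin : {r : ℝ | r ∈ Set.Ioc β ‖T‖ ∧ (r : ℂ) ∈ pointSpec T}.Finite) :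
    IsClosed (Set.range T) := by
  have hS := hT.isSelfAdjoint.mul_cfc_inv_mul_self (hT.zero_notMem_closure_spectrum_diff hess hfin)
  exact isClosed_range_of_comp_comp_eq T.continuous (cfc (·⁻¹ : ℝ → ℝ) T).continuous
    (congrArg DFunLike.coe hS)
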